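/- For any w ∈ C ∩ B̄_β, the Fréchet normal cone satisfies N̂(w, C ∩ B̄_β) = { y ∈ ℝ^d : for all i ∈ I(w) ∪ J(w) and all j ∈ {1,…,d_i}, y^i_j ≥ 0 if w^i_j = β, y^i_j = 0 if |w^i_j| < β, and y^i_j ≤ 0 if w^i_j = −β }. -/

import Mathlib

open MeasureTheory Filter
open scoped Classical BigOperators

noncomputable section

/-- The closed `l∞`-ball of radius `r` centered at `0` in `ℝ^d`. -/
def Binf (d : ℕ) (r : ℝ) : Set (EuclideanSpace ℝ (Fin d)) := {z | ∀ i, |z i| ≤ r}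

/-- The weighted group `l0`-norm constraint set
`C := {w : Σ_i p_i · 1_{w^i ≠ 0}(w) ≤ m}`, where the partition of coordinates into `n` blocks
is encoded by `blk : Fin d → Fin n` (coordinate `j` belongs to block `blk j`). -/
def groupC (d n : ℕ) (blk : Fin d → Fin n) (p : Fin n → ℝ) (m : ℝ) :
    Set (EuclideanSpace ℝ (Fin d)) :=
  {w | (∑ i : Fin n, if ∃ j, blk j = i ∧ w j ≠ 0 then p i else 0) ≤ m}

/-- The Fréchet normal cone of `S` at `w`:
`N̂(w,S) = {y : limsup_{x → w, x ∈ S, x ≠ w} ⟨y, x−w⟩/‖x−w‖₂ ≤ 0}`, expressed in ε-δ form. -/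
def frechetNormalCone {d : ℕ} (S : Set (EuclideanSpace ℝ (Fin d)))
    (w : EuclideanSpace ℝ (Fin d)) : Set (EuclideanSpace ℝ (Fin d)) :=
  {y | ∀ ε > (0 : ℝ), ∃ δ > (0 : ℝ), ∀ x ∈ S, x ≠ w → ‖x - w‖ < δ →
    (inner ℝ y (x - w) : ℝ) ≤ ε * ‖x - w‖}

/-- The set of block indices whose block of `w` is nonzero: `I(w) := {i : w^i ≠ 0}`. -/
def blkSupport {d n : ℕ} (blk : Fin d → Fin n) (w : EuclideanSpace ℝ (Fin d)) :
    Set (Fin n) := {i | ∃ j, blk j = i ∧ w j ≠ 0}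

/-- The aggregate penalty `Σ_{i ∈ I(w)} p_i` of the nonzero blocks of `w`. -/
def suppPenalty {d n : ℕ} (blk : Fin d → Fin n) (p : Fin n → ℝ)
    (w : EuclideanSpace ℝ (Fin d)) : ℝ :=
  ∑ i : Fin n, if i ∈ blkSupport blk w then p i else 0

/-- `J(w) := {j ∉ I(w) : Σ_{i ∈ I(w)} p_i + p_j ≤ m}`, the blocks of `w` that are zero but are
not constrained to be. -/
def blkFree {d n : ℕ} (blk : Fin d → Fin n) (p : Fin n → ℝ) (m : ℝ)
    (w : EuclideanSpace ℝ (Fin d)) : Set (Fin n) :=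
  {i | i ∉ blkSupport blk w ∧ suppPenalty blk p w + p i ≤ m}


/-!
Both inclusions are coordinatewise. A coordinate `j` whose block lies in `I(w) ∪ J(w)` can be
moved on its own without leaving `C`, so testing the Fréchet condition along `±e_j` gives the sign
conditions wherever the box `B̄_β` leaves room. Conversely, near `w` every point `x` of `C` keeps
the blocks of `I(w)`, hence, by the budget `m`, can only add blocks of `J(w)`; so each coordinate
of `x - w` vanishes or moves inward from an active box face, and `⟨y, x - w⟩ ≤ 0` termwise.
-/

open Topology

section FrechetNormalCone

variable {d : ℕ} {S : Set (EuclideanSpace ℝ (Fin d))} {w y : EuclideanSpace ℝ (Fin d)}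

theorem inner_nonpos_of_mem_frechetNormalCone {v : EuclideanSpace ℝ (Fin d)}
    (hy : y ∈ frechetNormalCone S w) (hv : ∀ᶠ t in 𝓝[>] (0 : ℝ), w + t • v ∈ S) :
    inner ℝ y v ≤ 0 := by
  by_contra! hpos
  have hv0 : v ≠ 0 := by
    rintro rfl
    simp at hpos
  have hnv : 0 < ‖v‖ := norm_pos_iff.2 hv0
  obtain ⟨δ, hδ, hδS⟩ := hy (inner ℝ y v / (2 * ‖v‖)) (by positivity)
  obtain ⟨t, htS, ht0, htδ⟩ := (hv.and (Ioo_mem_nhdsGT (div_pos hδ hnv))).exists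
  have hxw : w + t • v - w = t • v := add_sub_cancel_left w _
  have hnorm : ‖t • v‖ = t * ‖v‖ := by rw [norm_smul, Real.norm_of_nonneg ht0.le]
  have key := hδS _ htS (by simpa [ht0.ne'] using hv0)
    (by rwa [hxw, hnorm, ← lt_div_iff₀ hnv])
  rw [hxw, hnorm, inner_smul_right] at key
  have hhalf : inner ℝ y v / (2 * ‖v‖) * (t * ‖v‖) = t * inner ℝ y v / 2 := by
    field_simp
  nlinarith

theorem mem_frechetNormalCone_of_eventually_inner_nonpos
    (h : ∀ᶠ x in 𝓝 w, x ∈ S → inner ℝ y (x - w) ≤ 0) : y ∈ frechetNormalCone S w := by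
  intro ε hε
  obtain ⟨δ, hδ, hδS⟩ := Metric.eventually_nhds_iff.1 h
  exact ⟨δ, hδ, fun x hx _ hxw =>
    (hδS (by rwa [dist_eq_norm]) hx).trans (by positivity)⟩

end FrechetNormalCone

theorem sum_indicator_insert {ι M : Type*} [Fintype ι] [AddCommMonoid M] (p : ι → M)
    {s : Set ι} {i : ι} (hi : i ∉ s) :
    ∑ k, (insert i s).indicator p k = ∑ k, s.indicator p k + p i := by
  rw [Set.insert_eq, Set.indicator_union_of_disjoint (Set.disjoint_singleton_left.2 hi),
    Finset.sum_add_distrib, add_comm]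
  simp [Set.indicator_apply]

theorem sum_indicator_mono {ι M : Type*} [Fintype ι] [AddCommMonoid M] [PartialOrder M]
    [IsOrderedAddMonoid M] {p : ι → M} (hp : 0 ≤ p) {s t : Set ι} (h : s ⊆ t) :
    ∑ k, s.indicator p k ≤ ∑ k, t.indicator p k :=
  Finset.sum_le_sum fun k _ => Set.indicator_le_indicator_of_subset h hp k

section Blocks

variable {d n : ℕ} {blk : Fin d → Fin n} {p : Fin n → ℝ} {m β : ℝ}
  {w x : EuclideanSpace ℝ (Fin d)} {j : Fin d}

theorem suppPenalty_eq_sum_indicator (blk : Fin d → Fin n) (p : Fin n → ℝ)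
    (w : EuclideanSpace ℝ (Fin d)) :
    suppPenalty blk p w = ∑ i, (blkSupport blk w).indicator p i :=
  rfl

-- Not `Iff.rfl`: `groupC` decides its condition by `Nat.decidableExistsFin`, `suppPenalty`
-- classically, so the two `if`s agree only propositionally.
theorem mem_groupC_iff : w ∈ groupC d n blk p m ↔ suppPenalty blk p w ≤ m := by
  simp only [groupC, suppPenalty, blkSupport, Set.mem_ofPred_eq]
  refine Iff.of_eq (congrArg (· ≤ m) (Finset.sum_congr rfl fun i _ => ?_))
  split_ifs with h <;> simp [h]

theorem sum_indicator_insert_blkSupport_le (hw : w ∈ groupC d n blk p m) {i : Fin n}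
    (hi : i ∈ blkSupport blk w ∪ blkFree blk p m w) :
    ∑ k, (insert i (blkSupport blk w)).indicator p k ≤ m := by
  rcases hi with hI | hJ
  · rwa [Set.insert_eq_of_mem hI, ← suppPenalty_eq_sum_indicator, ← mem_groupC_iff]
  · rw [sum_indicator_insert p hJ.1]
    exact hJ.2

theorem blkSupport_subset_insert_of_forall_ne (h : ∀ k ≠ j, x k = w k) :
    blkSupport blk x ⊆ insert (blk j) (blkSupport blk w) := by
  rintro _ ⟨k, rfl, hk⟩
  by_cases hkj : k = j
  · exact Or.inl (congrArg blk hkj)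
  · exact Or.inr ⟨k, rfl, h k hkj ▸ hk⟩

theorem mem_groupC_of_forall_ne (hp : 0 ≤ p) (hw : w ∈ groupC d n blk p m)
    (hj : blk j ∈ blkSupport blk w ∪ blkFree blk p m w) (h : ∀ k ≠ j, x k = w k) :
    x ∈ groupC d n blk p m :=
  mem_groupC_iff.2 <| (sum_indicator_mono hp (blkSupport_subset_insert_of_forall_ne h)).trans
    (sum_indicator_insert_blkSupport_le hw hj)

theorem blkSupport_subset_union_blkFree (hp : 0 ≤ p) (hx : x ∈ groupC d n blk p m)
    (hsub : blkSupport blk w ⊆ blkSupport blk x) :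
    blkSupport blk x ⊆ blkSupport blk w ∪ blkFree blk p m w := by
  intro i hi
  by_cases hiw : i ∈ blkSupport blk w
  · exact Or.inl hiw
  refine Or.inr ⟨hiw, ?_⟩
  calc suppPenalty blk p w + p i = ∑ k, (insert i (blkSupport blk w)).indicator p k :=
        (sum_indicator_insert p hiw).symm
    _ ≤ suppPenalty blk p x := sum_indicator_mono hp (Set.insert_subset hi hsub)
    _ ≤ m := mem_groupC_iff.1 hx

theorem eventually_blkSupport_subset (blk : Fin d → Fin n) (w : EuclideanSpace ℝ (Fin d)) :
    ∀ᶠ x in 𝓝 w, blkSupport blk w ⊆ blkSupport blk x := by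
  have hne : ∀ᶠ x in 𝓝 w, ∀ k, w k ≠ 0 → x k ≠ 0 := by
    refine Filter.eventually_all.2 fun k => ?_
    by_cases hk : w k = 0
    · simp [hk]
    · filter_upwards [(PiLp.continuous_apply 2 _ k).continuousAt.eventually_ne hk]
        with x hx _ using hx
  filter_upwards [hne] with x hx
  rintro _ ⟨k, rfl, hk⟩
  exact ⟨k, rfl, hx k hk⟩

theorem mem_Binf_of_forall_ne (hw : w ∈ Binf d β) (h : ∀ k ≠ j, x k = w k) (hj : |x j| ≤ β) :
    x ∈ Binf d β := by
  intro k
  by_cases hkj : k = j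
  · exact hkj ▸ hj
  · exact h k hkj ▸ hw k

theorem add_smul_single_mem (hp : 0 ≤ p) (hw : w ∈ groupC d n blk p m ∩ Binf d β)
    (hj : blk j ∈ blkSupport blk w ∪ blkFree blk p m w) {t : ℝ} (ht : |w j + t| ≤ β) :
    w + t • EuclideanSpace.single j 1 ∈ groupC d n blk p m ∩ Binf d β := by
  have hoff : ∀ k ≠ j, (w + t • EuclideanSpace.single j (1 : ℝ)) k = w k := by
    intro k hk
    simp [hk]
  exact ⟨mem_groupC_of_forall_ne hp hw.1 hj hoff,
    mem_Binf_of_forall_ne hw.2 hoff (by simpa using ht)⟩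

theorem coord_nonpos_of_mem_frechetNormalCone (hp : 0 ≤ p)
    (hw : w ∈ groupC d n blk p m ∩ Binf d β) (hj : blk j ∈ blkSupport blk w ∪ blkFree blk p m w)
    {y : EuclideanSpace ℝ (Fin d)} (hy : y ∈ frechetNormalCone (groupC d n blk p m ∩ Binf d β) w)
    (hlt : w j < β) : y j ≤ 0 := by
  have hwj := abs_le.1 (hw.2 j)
  have hv : ∀ᶠ t in 𝓝[>] (0 : ℝ),
      w + t • EuclideanSpace.single j 1 ∈ groupC d n blk p m ∩ Binf d β := by
    filter_upwards [Ioc_mem_nhdsGT (sub_pos.2 hlt)] with t ⟨ht0, htβ⟩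
    exact add_smul_single_mem hp hw hj (abs_le.2 ⟨by linarith, by linarith⟩)
  simpa [EuclideanSpace.inner_single_right] using inner_nonpos_of_mem_frechetNormalCone hy hv

theorem coord_nonneg_of_mem_frechetNormalCone (hp : 0 ≤ p)
    (hw : w ∈ groupC d n blk p m ∩ Binf d β) (hj : blk j ∈ blkSupport blk w ∪ blkFree blk p m w)
    {y : EuclideanSpace ℝ (Fin d)} (hy : y ∈ frechetNormalCone (groupC d n blk p m ∩ Binf d β) w)
    (hgt : -β < w j) : 0 ≤ y j := by
  have hwj := abs_le.1 (hw.2 j)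
  have hv : ∀ᶠ t in 𝓝[>] (0 : ℝ),
      w + t • -EuclideanSpace.single j 1 ∈ groupC d n blk p m ∩ Binf d β := by
    filter_upwards [Ioc_mem_nhdsGT (neg_lt_iff_pos_add.1 hgt)] with t ⟨ht0, htβ⟩
    rw [smul_neg, ← neg_smul]
    exact add_smul_single_mem hp hw hj (abs_le.2 ⟨by linarith, by linarith⟩)
  simpa [EuclideanSpace.inner_single_right] using inner_nonpos_of_mem_frechetNormalCone hy hv

end Blocks

theorem sub_mul_nonpos_of_sign_conditions {a b c β : ℝ} (ha : |a| ≤ β) (hb : |b| ≤ β)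
    (h : (b = β → 0 ≤ c) ∧ (|b| < β → c = 0) ∧ (b = -β → c ≤ 0)) : (a - b) * c ≤ 0 := by
  obtain ⟨hup, hin, hdown⟩ := h
  have ha' := abs_le.1 ha
  rcases hb.lt_or_eq with hlt | heq
  · simp [hin hlt]
  · rcases (abs_eq (abs_nonneg b |>.trans hb)).1 heq with rfl | rfl
    · exact mul_nonpos_of_nonpos_of_nonneg (by linarith) (hup rfl)
    · exact mul_nonpos_of_nonneg_of_nonpos (by linarith) (hdown rfl)

theorem frechet_normal_cone_C_inter_ball_general
    (d n : ℕ) (blk : Fin d → Fin n)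
    (p : Fin n → ℝ) (hp : ∀ i, 0 < p i) (m : ℝ)
    (β : ℝ) (hβ : 0 < β)
    (w : EuclideanSpace ℝ (Fin d)) (hw : w ∈ groupC d n blk p m ∩ Binf d β) :
    frechetNormalCone (groupC d n blk p m ∩ Binf d β) w
      = {y : EuclideanSpace ℝ (Fin d) |
          ∀ i : Fin n, (i ∈ blkSupport blk w ∨ i ∈ blkFree blk p m w) →
            ∀ j : Fin d, blk j = i →
              (w j = β → 0 ≤ y j) ∧ (|w j| < β → y j = 0) ∧ (w j = -β → y j ≤ 0)} := by
  have hp' : 0 ≤ p := fun i => (hp i).le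
  ext y
  constructor
  · rintro hy _ hj j rfl
    have hnonpos := coord_nonpos_of_mem_frechetNormalCone hp' hw hj hy
    have hnonneg := coord_nonneg_of_mem_frechetNormalCone hp' hw hj hy
    refine ⟨fun h => hnonneg (by linarith), fun h => ?_, fun h => hnonpos (by linarith)⟩
    exact le_antisymm (hnonpos (abs_lt.1 h).2) (hnonneg (abs_lt.1 h).1)
  · intro hy
    apply mem_frechetNormalCone_of_eventually_inner_nonpos
    filter_upwards [eventually_blkSupport_subset blk w] with x hsub hx
    have hIJ := blkSupport_subset_union_blkFree hp' hx.1 hsub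
    simp only [PiLp.inner_apply, RCLike.inner_apply, conj_trivial, PiLp.sub_apply]
    refine Finset.sum_nonpos fun k _ => ?_
    by_cases hk : blk k ∈ blkSupport blk w ∪ blkFree blk p m w
    · exact sub_mul_nonpos_of_sign_conditions (hx.2 k) (hw.2 k) (hy _ hk k rfl)
    · have hxk : x k = 0 := by_contra fun h => hk (hIJ ⟨k, rfl, h⟩)
      have hwk : w k = 0 := by_contra fun h => hk (Or.inl ⟨k, rfl, h⟩)
      simp [hxk, hwk]

/-- For any `w ∈ C ∩ B̄_β`, the Fréchet normal cone satisfies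
`N̂(w, C ∩ B̄_β) = {y : ∀ i ∈ I(w) ∪ J(w), ∀ j ∈ block i, y^i_j ≥ 0 if w^i_j = β,
y^i_j = 0 if |w^i_j| < β, and y^i_j ≤ 0 if w^i_j = −β}`. -/
theorem frechet_normal_cone_C_inter_ball
    (d n : ℕ) (blk : Fin d → Fin n) (hblk : Function.Surjective blk)
    (p : Fin n → ℝ) (hp : ∀ i, 0 < p i) (m : ℝ) (hm : 0 < m)
    (β : ℝ) (hβ : 0 < β)
    (w : EuclideanSpace ℝ (Fin d)) (hw : w ∈ groupC d n blk p m ∩ Binf d β) :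
    frechetNormalCone (groupC d n blk p m ∩ Binf d β) w
      = {y : EuclideanSpace ℝ (Fin d) |
          ∀ i : Fin n, (i ∈ blkSupport blk w ∨ i ∈ blkFree blk p m w) →
            ∀ j : Fin d, blk j = i →
              (w j = β → 0 ≤ y j) ∧ (|w j| < β → y j = 0) ∧ (w j = -β → y j ≤ 0)} :=
  frechet_normal_cone_C_inter_ball_general d n blk p hp m β hβ w hw
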